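/- arXiv:math/0512589 — 5 statements merged into one kernel-verified Lean document; each statement's English description precedes it below -/
import Mathlib

section
/- Let A be an endomorphism of a finite-dimensional vector space V over a field F whose minimal polynomial is f^k for a monic irreducible polynomial f of degree d. Then there exists v ∈ V with (f(A))^{k-1} A^{d-1} v ≠ 0, and moreover (f(A))^{k-1} A^{d-1} v ∉ span{(f(A))^{k-1} A^j v : j = 0, …, d-2}. -/
open Polynomial

theorem stmt4 {F V : Type*} [Field F] [AddCommGroup V] [Module F V]
    [FiniteDimensional F V]
    (A : Module.End F V) (f : Polynomial F) (k d : ℕ)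
    (hmon : f.Monic) (hirr : Irreducible f) (hd : f.natDegree = d)
    (hk : 1 ≤ k) (hd1 : 1 ≤ d) (hmin : minpoly F A = f ^ k) :
    ∃ v : V,
      ((Polynomial.aeval A f) ^ (k - 1) * A ^ (d - 1)) v ≠ 0 ∧
      ((Polynomial.aeval A f) ^ (k - 1) * A ^ (d - 1)) v ∉
        Submodule.span F
          ((fun j : ℕ => ((Polynomial.aeval A f) ^ (k - 1) * A ^ j) v) ''
            {j : ℕ | j < d - 1}) := by
  have hf0 : f ≠ 0 := hmon.ne_zero
  -- aeval A (f^(k-1)) ≠ 0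
  have hne : Polynomial.aeval A (f ^ (k - 1)) ≠ 0 := by
    intro h
    have hdvd : minpoly F A ∣ f ^ (k - 1) := minpoly.dvd F A h
    rw [hmin] at hdvd
    have h1 : (f ^ k).natDegree ≤ (f ^ (k - 1)).natDegree :=
      Polynomial.natDegree_le_of_dvd hdvd (pow_ne_zero _ hf0)
    rw [Polynomial.natDegree_pow, Polynomial.natDegree_pow, hd] at h1
    have : k ≤ k - 1 := le_of_mul_le_mul_right (by linarith [Nat.mul_comm d k]) hd1
    omega
  obtain ⟨v, hv⟩ : ∃ v : V, Polynomial.aeval A (f ^ (k - 1)) v ≠ 0 := by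
    by_contra hc
    push_neg at hc
    exact hne (LinearMap.ext hc)
  refine ⟨v, ?_⟩
  have key : ((Polynomial.aeval A f) ^ (k - 1) * A ^ (d - 1)) v ∉
      Submodule.span F
        ((fun j : ℕ => ((Polynomial.aeval A f) ^ (k - 1) * A ^ j) v) ''
          {j : ℕ | j < d - 1}) := by
    intro hmem
    rw [Finsupp.mem_span_image_iff_linearCombination] at hmem
    obtain ⟨l, hl, hle⟩ := hmem
    -- the polynomial p = ∑ c_j X^j
    set p : Polynomial F := ∑ j ∈ l.support, Polynomial.C (l j) * Polynomial.X ^ j with hp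
    have hpdeg : p.degree < (d - 1 : ℕ) := by
      apply lt_of_le_of_lt (Polynomial.degree_sum_le _ _)
      rw [Finset.sup_lt_iff (by exact_mod_cast WithBot.bot_lt_coe (d - 1 : ℕ))]
      intro j hj
      have hjlt : j < d - 1 := hl hj
      calc (Polynomial.C (l j) * Polynomial.X ^ j).degree ≤ (j : WithBot ℕ) := by
            simpa using Polynomial.degree_C_mul_X_pow_le j (l j)
        _ < ((d - 1 : ℕ) : WithBot ℕ) := by exact_mod_cast hjlt
    have hpaev : Polynomial.aeval A p v = Finsupp.linearCombination F
        (fun j : ℕ => (A ^ j) v) l := by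
      rw [hp, map_sum, Finsupp.linearCombination_apply, Finsupp.sum]
      simp only [map_mul, Polynomial.aeval_C, Polynomial.aeval_X_pow, LinearMap.sum_apply,
        Module.End.mul_apply, Module.algebraMap_end_apply, LinearMap.smul_apply]
    -- h = X^(d-1) - p
    set h : Polynomial F := Polynomial.X ^ (d - 1) - p with hh
    have hhdeg : h.degree = ((d - 1 : ℕ) : WithBot ℕ) := by
      rw [hh, Polynomial.degree_sub_eq_left_of_degree_lt
        (by rwa [Polynomial.degree_X_pow]), Polynomial.degree_X_pow]
    have hhmonic : h.Monic := by
      have := Polynomial.monic_X_pow (R := F) (d - 1)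
      rw [hh, sub_eq_add_neg]
      exact this.add_of_left (by simpa [Polynomial.degree_X_pow] using hpdeg)
    have key2 : ((Polynomial.aeval A f) ^ (k - 1)) (Polynomial.aeval A p v) =
        (Finsupp.linearCombination F
          (fun j : ℕ => ((Polynomial.aeval A f) ^ (k - 1) * A ^ j) v)) l := by
      rw [hpaev, Finsupp.linearCombination_apply, Finsupp.linearCombination_apply,
        Finsupp.sum, Finsupp.sum, map_sum]
      simp [Module.End.mul_apply]
    have hann : Polynomial.aeval A (f ^ (k - 1) * h) v = 0 := by
      have e1 : Polynomial.aeval A (f ^ (k - 1) * h) v =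
          ((Polynomial.aeval A f) ^ (k - 1) * A ^ (d - 1)) v -
          ((Polynomial.aeval A f) ^ (k - 1)) (Polynomial.aeval A p v) := by
        rw [map_mul, map_pow, hh, map_sub, Polynomial.aeval_X_pow]
        simp [Module.End.mul_apply, map_sub]
      rw [e1, key2, hle, sub_self]
    -- f does not divide h
    have hfh : ¬ f ∣ h := by
      intro hdvd
      have h1 : f.natDegree ≤ h.natDegree := Polynomial.natDegree_le_of_dvd hdvd hhmonic.ne_zero
      have h2 : h.natDegree = d - 1 := Polynomial.natDegree_eq_of_degree_eq_some hhdeg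
      omega
    have hcop : IsCoprime f h := by
      apply isCoprime_of_irreducible_dvd (fun ⟨h1, _⟩ => hf0 h1)
      intro z hz hzf hzh
      exact hfh (dvd_trans ((hz.prime.associated_of_dvd hirr.prime hzf).symm.dvd) hzh)
    obtain ⟨a, b, hab⟩ := hcop
    have hfk2 : f ^ k = f * f ^ (k - 1) := by
      conv_lhs => rw [show k = 1 + (k - 1) by omega, pow_add, pow_one]
    have hcomb : f ^ (k - 1) = a * f ^ k + b * (f ^ (k - 1) * h) := by
      calc f ^ (k - 1) = (a * f + b * h) * f ^ (k - 1) := by rw [hab, one_mul]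
        _ = a * f ^ k + b * (f ^ (k - 1) * h) := by rw [hfk2]; ring
    have hfk : Polynomial.aeval A (f ^ k) = 0 := by
      rw [← hmin]; exact minpoly.aeval F A
    apply hv
    calc Polynomial.aeval A (f ^ (k - 1)) v
        = Polynomial.aeval A (a * f ^ k + b * (f ^ (k - 1) * h)) v := by rw [← hcomb]
      _ = Polynomial.aeval A a (Polynomial.aeval A (f ^ k) v) +
          Polynomial.aeval A b (Polynomial.aeval A (f ^ (k - 1) * h) v) := by
            simp [map_add, map_mul, Module.End.mul_apply]
      _ = 0 := by rw [hann, hfk]; simp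
  refine ⟨fun h0 => key (h0 ▸ Submodule.zero_mem _), key⟩
end

section
/- Let A be an endomorphism of a finite-dimensional vector space V over a field F whose minimal polynomial is f^k for a monic irreducible polynomial f of degree d. Then there exists v ∈ V such that the kd vectors (f(A))^{i₁-1} A^{i₂-1} v, for i₁ = 1,…,k and i₂ = 1,…,d, are linearly independent, and there exists an A-invariant subspace U of V with V = span{(f(A))^{i₁-1} A^{i₂-1} v} ⊕ U. -/
/-!
Regard `V` as the `F[X]`-module `Module.AEval' A`, on which `X` acts as `A`. It is killed by
`f ^ k` but not by `f ^ (k - 1)`, so in its decomposition into cyclic primary summands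
`F[X] ⧸ (q ^ e)` (structure theorem over the PID `F[X]`) some summand is `F[X] ⧸ (f ^ k)`.
Take `v` to generate that summand and `U` to be the sum of the others; `U` is `A`-invariant
because it is an `F[X]`-submodule. The polynomials `f ^ i * X ^ j` (`i < k`, `j < d`) have the
distinct degrees `i * d + j`, hence form an `F`-basis of the polynomials of degree `< k * d`,
which `r ↦ r(A) v` maps isomorphically onto `F[X] ⧸ (f ^ k) ≅ F[X] ∙ v`.
-/

open Polynomial DirectSum

namespace Polynomial

variable {R : Type*}

noncomputable def Monic.adicSequence [Semiring R] [Nontrivial R] {f : R[X]} (hf : f.Monic) :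
    Sequence R where
  elems' n := f ^ (n / f.natDegree) * X ^ (n % f.natDegree)
  degree_eq' n := by
    rw [degree_eq_natDegree ((hf.pow _).mul (monic_X_pow _)).ne_zero,
      (hf.pow _).natDegree_mul (monic_X_pow _), hf.natDegree_pow, natDegree_X_pow,
      Nat.div_add_mod']

lemma Monic.monic_adicSequence [Semiring R] [Nontrivial R] {f : R[X]} (hf : f.Monic) (n : ℕ) :
    (hf.adicSequence n).Monic :=
  (hf.pow _).mul (monic_X_pow _)

lemma Monic.pow_mul_X_pow_eq_adicSequence_comp [Semiring R] [Nontrivial R] {f : R[X]}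
    (hf : f.Monic) (k : ℕ) :
    (fun q : Fin k × Fin f.natDegree => f ^ (q.1 : ℕ) * X ^ (q.2 : ℕ)) =
      hf.adicSequence ∘ Fin.val ∘ finProdFinEquiv := by
  ext1 q
  have hd : 0 < f.natDegree := q.2.pos
  change _ = f ^ ((q.2 + f.natDegree * q.1 : ℕ) / f.natDegree) *
    X ^ ((q.2 + f.natDegree * q.1 : ℕ) % f.natDegree)
  rw [Nat.add_mul_div_left _ _ hd, Nat.div_eq_of_lt q.2.isLt, zero_add,
    Nat.add_mul_mod_self_left, Nat.mod_eq_of_lt q.2.isLt]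

theorem Monic.linearIndependent_pow_mul_X_pow [Ring R] [IsDomain R] {f : R[X]}
    (hf : f.Monic) (k : ℕ) :
    LinearIndependent R (fun q : Fin k × Fin f.natDegree => f ^ (q.1 : ℕ) * X ^ (q.2 : ℕ)) := by
  rw [hf.pow_mul_X_pow_eq_adicSequence_comp]
  exact hf.adicSequence.linearIndependent.comp _ (Fin.val_injective.comp finProdFinEquiv.injective)

theorem Monic.span_pow_mul_X_pow [Ring R] [Nontrivial R] {f : R[X]} (hf : f.Monic) (k : ℕ) :
    Submodule.span R (Set.range fun q : Fin k × Fin f.natDegree => f ^ (q.1 : ℕ) * X ^ (q.2 : ℕ))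
      = degreeLT R (k * f.natDegree) := by
  rw [hf.pow_mul_X_pow_eq_adicSequence_comp, Set.range_comp, Set.range_comp,
    finProdFinEquiv.range_eq_univ, Set.image_univ, Fin.range_val]
  exact hf.adicSequence.span_degreeLT fun n _ => (hf.monic_adicSequence n).leadingCoeff ▸ isUnit_one

end Polynomial

section CyclicSubmodule

variable {R M : Type*} [CommRing R] [AddCommGroup M] [Module R[X] M] [Module R M]
  [IsScalarTower R R[X] M] {g : R[X]} {m : M} {ι : Type*} {P : ι → R[X]}

theorem linearIndependent_smul_of_span_le_degreeLT [IsDomain R] (hP : LinearIndependent R P)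
    (hspan : Submodule.span R (Set.range P) ≤ degreeLT R g.natDegree)
    (hm : ∀ r : R[X], r • m = 0 → g ∣ r) : LinearIndependent R fun i => P i • m := by
  refine hP.map (f := (LinearMap.toSpanSingleton R[X] M m).restrictScalars R) ?_
  refine Submodule.disjoint_def.mpr fun r hr hker => ?_
  by_contra hr0
  have hlt : r.natDegree < g.natDegree :=
    (natDegree_lt_iff_degree_lt hr0).mpr (mem_degreeLT.mp (hspan hr))
  exact hlt.not_ge (natDegree_le_of_dvd (hm r hker) hr0)

theorem span_smul_eq_span_singleton [Nontrivial R] (hg : g.Monic)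
    (hspan : Submodule.span R (Set.range P) = degreeLT R g.natDegree)
    (hm : ∀ r : R[X], g ∣ r → r • m = 0) :
    Submodule.span R (Set.range fun i => P i • m) = (R[X] ∙ m).restrictScalars R := by
  set ψ := (LinearMap.toSpanSingleton R[X] M m).restrictScalars R
  change Submodule.span R (Set.range (ψ ∘ P)) = _
  rw [Set.range_comp, ← Submodule.map_span, hspan]
  refine le_antisymm ?_ fun x hx => ?_
  · rintro _ ⟨r, -, rfl⟩
    exact Submodule.mem_span_singleton.mpr ⟨r, rfl⟩
  obtain ⟨r, rfl⟩ := Submodule.mem_span_singleton.mp hx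
  refine ⟨r %ₘ g, mem_degreeLT.mpr ?_, ?_⟩
  · exact (degree_modByMonic_lt r hg).trans_eq (degree_eq_natDegree hg.ne_zero)
  · change (r %ₘ g) • m = r • m
    conv_rhs => rw [← modByMonic_add_div r g, add_smul, hm _ (dvd_mul_right g _), add_zero]

end CyclicSubmodule

theorem Prime.associated_of_dvd_pow_of_not_dvd_pow_pred {M : Type*} [CommMonoidWithZero M]
    [IsCancelMulZero M] {p a : M} (hp : Prime p) {k : ℕ} (h : a ∣ p ^ k)
    (h' : ¬a ∣ p ^ (k - 1)) : Associated a (p ^ k) := by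
  obtain ⟨j, hj, hassoc⟩ := (dvd_prime_pow hp k).mp h
  obtain rfl | hlt := hj.eq_or_lt
  · exact hassoc
  · exact absurd (hassoc.dvd.trans (pow_dvd_pow p (Nat.le_pred_of_lt hlt))) h'

theorem LinearMap.isCompl_range_ker_of_comp_eq_id {R M N : Type*} [Ring R] [AddCommGroup M]
    [AddCommGroup N] [Module R M] [Module R N] {σ : N →ₗ[R] M} {π : M →ₗ[R] N}
    (h : π ∘ₗ σ = LinearMap.id) : IsCompl (range σ) (ker π) := by
  have hidem : IsIdempotentElem (σ ∘ₗ π) := by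
    change σ ∘ₗ (π ∘ₗ σ) ∘ₗ π = σ ∘ₗ π
    rw [h, LinearMap.id_comp]
  have hσ : ker σ = ⊥ := ker_eq_bot_of_inverse h
  have hπ : range π = ⊤ := range_eq_top_of_surjective π (surjective_of_comp_eq_id σ π h)
  simpa [range_comp_of_range_eq_top σ hπ, ker_comp_of_ker_eq_bot π hσ] using
    IsIdempotentElem.isCompl hidem

namespace Submodule.Quotient

variable {R : Type*} [CommRing R] {a : R}

theorem smul_mk_one_eq_zero_iff (r : R) : r • (mk 1 : R ⧸ R ∙ a) = 0 ↔ a ∣ r := by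
  rw [← mk_smul, smul_eq_mul, mul_one, mk_eq_zero, mem_span_singleton,
    dvd_iff_exists_eq_mul_left]
  simp [smul_eq_mul, eq_comm]

theorem smul_eq_zero_of_dvd {r : R} (h : a ∣ r) (x : R ⧸ R ∙ a) : r • x = 0 := by
  obtain ⟨s, rfl⟩ := mk_surjective _ x
  rw [← mul_one s, ← smul_eq_mul, mk_smul, smul_smul, smul_mk_one_eq_zero_iff]
  exact h.mul_right s

theorem span_singleton_mk_one : R ∙ (mk 1 : R ⧸ R ∙ a) = ⊤ :=
  (span_singleton_eq_top_iff R _).mpr fun x => by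
    obtain ⟨s, rfl⟩ := mk_surjective _ x
    exact ⟨s, by rw [← mk_smul, smul_eq_mul, mul_one]⟩

end Submodule.Quotient

theorem Module.exists_isCompl_span_singleton_of_prime_pow {R M : Type*} [CommRing R] [IsDomain R]
    [IsPrincipalIdealRing R] [AddCommGroup M] [Module R M] [Module.Finite R M] {p : R}
    (hp : Prime p) {k : ℕ} (hkill : ∀ x : M, p ^ k • x = 0)
    (hsharp : ∃ x : M, p ^ (k - 1) • x ≠ 0) :
    ∃ m : M, (∀ r : R, r • m = 0 ↔ p ^ k ∣ r) ∧ ∃ N : Submodule R M, IsCompl (R ∙ m) N := by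
  classical
  have htors : Module.IsTorsion R M := fun x =>
    ⟨⟨p ^ k, mem_nonZeroDivisors_of_ne_zero (pow_ne_zero k hp.ne_zero)⟩, hkill x⟩
  obtain ⟨ι, _, q, -, e, ⟨G⟩⟩ := Module.equiv_directSum_of_isTorsion htors
  obtain ⟨x, hx⟩ := hsharp
  obtain ⟨i, hi⟩ : ∃ i, p ^ (k - 1) • component R ι _ i (G x) ≠ 0 := by
    by_contra! h
    refine hx (G.injective (DirectSum.ext_component R fun i => ?_))
    simpa using h i
  -- the summand `R ⧸ (q i ^ e i)` is not killed by `p ^ (k - 1)`, so `q i ^ e i ~ p ^ k`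
  set σ := G.symm.toLinearMap ∘ₗ lof R ι (fun i => R ⧸ R ∙ q i ^ e i) i
  set π := component R ι (fun i => R ⧸ R ∙ q i ^ e i) i ∘ₗ G.toLinearMap
  have hπσ : π ∘ₗ σ = LinearMap.id := by
    ext
    simp [π, σ]
  have hσ : Function.Injective σ := LinearMap.injective_of_comp_eq_id σ π hπσ
  set m := σ (Submodule.Quotient.mk 1)
  have hassoc : Associated (q i ^ e i) (p ^ k) := by
    refine hp.associated_of_dvd_pow_of_not_dvd_pow_pred ?_ fun h => hi ?_
    · rw [← Submodule.Quotient.smul_mk_one_eq_zero_iff, ← hσ.eq_iff, map_smul, map_zero]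
      exact hkill m
    · exact Submodule.Quotient.smul_eq_zero_of_dvd h _
  refine ⟨m, fun r => ?_, LinearMap.ker π, ?_⟩
  · rw [← hassoc.dvd_iff_dvd_left, ← Submodule.Quotient.smul_mk_one_eq_zero_iff, ← hσ.eq_iff,
      map_smul, map_zero]
  · rw [← Set.image_singleton, ← Submodule.map_span, Submodule.Quotient.span_singleton_mk_one,
      Submodule.map_top]
    exact LinearMap.isCompl_range_ker_of_comp_eq_id hπσ

theorem Module.AEval'.forall_smul_eq_zero_iff {R M : Type*} [CommRing R] [AddCommGroup M]
    [Module R M] (φ : Module.End R M) (r : R[X]) :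
    (∀ x : Module.AEval' φ, r • x = 0) ↔ aeval φ r = 0 := by
  rw [← Module.mem_annihilator, Module.AEval.annihilator_eq_ker_aeval, RingHom.mem_ker]

theorem Module.AEval'.exists_isCompl_span_singleton_of_minpoly_eq_pow {F V : Type*} [Field F]
    [AddCommGroup V] [Module F V] [FiniteDimensional F V] (A : Module.End F V) {f : F[X]}
    (hf : Irreducible f) {k : ℕ} (hk : 1 ≤ k) (hmin : minpoly F A = f ^ k) :
    ∃ m : Module.AEval' A, (∀ r : F[X], r • m = 0 ↔ f ^ k ∣ r) ∧
      ∃ N : Submodule F[X] (Module.AEval' A), IsCompl (F[X] ∙ m) N := by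
  refine Module.exists_isCompl_span_singleton_of_prime_pow hf.prime
    ((forall_smul_eq_zero_iff A _).mpr (hmin ▸ minpoly.aeval F A)) ?_
  by_contra! h
  have := minpoly.dvd F A ((forall_smul_eq_zero_iff A _).mp h)
  rw [hmin, pow_dvd_pow_iff hf.ne_zero hf.not_isUnit] at this
  omega

theorem stmt5 {F V : Type*} [Field F] [AddCommGroup V] [Module F V]
    [FiniteDimensional F V]
    (A : Module.End F V) (f : Polynomial F) (k d : ℕ)
    (hmon : f.Monic) (hirr : Irreducible f) (hd : f.natDegree = d)
    (hk : 1 ≤ k) (hmin : minpoly F A = f ^ k) :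
    ∃ v : V,
      LinearIndependent F (fun q : Fin k × Fin d =>
        ((Polynomial.aeval A f) ^ (q.1 : ℕ) * A ^ (q.2 : ℕ)) v) ∧
      ∃ U : Submodule F V, (∀ u ∈ U, A u ∈ U) ∧
        IsCompl (Submodule.span F (Set.range fun q : Fin k × Fin d =>
          ((Polynomial.aeval A f) ^ (q.1 : ℕ) * A ^ (q.2 : ℕ)) v)) U := by
  subst hd
  obtain ⟨m, hm, N, hN⟩ :=
    Module.AEval'.exists_isCompl_span_singleton_of_minpoly_eq_pow A hirr hk hmin
  set e := Module.AEval'.of A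
  have hfamily : (fun q : Fin k × Fin f.natDegree =>
      ((aeval A f) ^ (q.1 : ℕ) * A ^ (q.2 : ℕ)) (e.symm m)) =
        (e.symm : Module.AEval' A →ₗ[F] V) ∘ fun q => (f ^ (q.1 : ℕ) * X ^ (q.2 : ℕ)) • m := by
    ext q
    simp [e]
  have hspan := hmon.span_pow_mul_X_pow k
  rw [← hmon.natDegree_pow] at hspan
  refine ⟨e.symm m, ?_, (N.restrictScalars F).map (e.symm : Module.AEval' A →ₗ[F] V), ?_, ?_⟩
  · rw [hfamily]
    exact (linearIndependent_smul_of_span_le_degreeLT (hmon.linearIndependent_pow_mul_X_pow k)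
      hspan.le fun r => (hm r).mp).map' _ e.symm.ker
  · rintro _ ⟨n, hn, rfl⟩
    exact ⟨(X : F[X]) • n, N.smul_mem X hn, Module.AEval'.of_symm_X_smul A n⟩
  · rw [hfamily, Set.range_comp, ← Submodule.map_span,
      span_smul_eq_span_singleton (hmon.pow k) hspan fun r => (hm r).mpr]
    exact (Submodule.orderIsoMapComap e.symm).isCompl_iff.mp
      ((Submodule.isCompl_restrictScalars_iff F).mpr hN)
end

section
/- Let A : V → W and B : W → V be linear maps between finite-dimensional spaces over a field F with BA nilpotent, x ∈ V, and x' ∈ V* such that ⟨(BA)^m x, x'⟩ ≠ 0 while (BA)^{m+1}x = 0 and (A*B*)^{m+1}x' = 0. Then the (m+1)×(m+1) matrix G with entries G_{ij} = ⟨(BA)^{i-1}x, (A*B*)^{m+1-j}x'⟩ is upper triangular with nonzero diagonal, hence invertible; consequently the vectors (BA)^i x, i = 0,…,m, are linearly independent and their span admits a BA-invariant direct complement in V, namely the annihilator of span{(A*B*)^j x' : j = 0,…,m}. -/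
/-!
Write `T = BA` and `T*` for its dual map, so that `⟨T^i x, T*^k x'⟩ = ⟨T^(i+k) x, x'⟩`.
Hence `G i j = x'(T^(m-j+i) x)`, which vanishes for `i > j` because `T^(m+1) x = 0` and equals
`x'(T^m x) ≠ 0` on the diagonal. An invertible pairing matrix between a family `v` in `V` and a
family `φ` in `V*` forces `v` to be independent and `span v` to meet `(span φ)°` trivially; the
dimension count `dim (span φ)° ≥ dim V - card ι` then makes the two complementary. Finally
`span {T*^j x'}` is `T*`-stable because `T*^(m+1) x' = 0`, so its annihilator is `T`-stable.
-/

open Module Submodule Set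

theorem Module.End.dualMap_pow_apply {R M : Type*} [CommSemiring R] [AddCommMonoid M]
    [Module R M] (f : Module.End R M) (k : ℕ) (φ : Dual R M) (v : M) :
    (((f.dualMap : Module.End R (Dual R M)) ^ k) φ) v = φ ((f ^ k) v) := by
  induction k generalizing v with
  | zero => rfl
  | succ k ih =>
    rw [pow_succ', Module.End.mul_apply, LinearMap.dualMap_apply, ih, pow_succ,
      Module.End.mul_apply]

theorem Module.End.map_span_range_pow_apply_le {R M : Type*} [Semiring R] [AddCommMonoid M]
    [Module R M] (f : Module.End R M) {x : M} {n : ℕ} (hn : (f ^ n) x = 0) :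
    (span R (range fun j : Fin n => (f ^ (j : ℕ)) x)).map f ≤
      span R (range fun j : Fin n => (f ^ (j : ℕ)) x) := by
  rw [map_span_le]
  rintro _ ⟨j, rfl⟩
  rw [← Module.End.mul_apply, ← pow_succ']
  rcases (Nat.add_one_le_of_lt j.isLt).lt_or_eq with hj | hj
  · exact subset_span ⟨⟨j + 1, hj⟩, rfl⟩
  · rw [hj, hn]
    exact zero_mem _

theorem Submodule.map_dualCoannihilator_le_of_map_dualMap_le {R M : Type*} [CommSemiring R]
    [AddCommMonoid M] [Module R M] {f : Module.End R M} {Φ : Submodule R (Dual R M)}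
    (h : Φ.map f.dualMap ≤ Φ) : Φ.dualCoannihilator.map f ≤ Φ.dualCoannihilator := by
  rintro _ ⟨v, hv, rfl⟩
  rw [SetLike.mem_coe, mem_dualCoannihilator] at hv
  exact (mem_dualCoannihilator _).mpr fun ψ hψ => hv _ (h (mem_map_of_mem hψ))

theorem Matrix.isUnit_of_isUpperTriangular {F ι : Type*} [Field F] [Fintype ι] [DecidableEq ι]
    [LinearOrder ι] {M : Matrix ι ι F} (hM : M.IsUpperTriangular) (hdiag : ∀ i, M i i ≠ 0) :
    IsUnit M := by
  rw [Matrix.isUnit_iff_isUnit_det, Matrix.det_of_isUpperTriangular hM, isUnit_iff_ne_zero]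
  exact Finset.prod_ne_zero_iff.mpr fun i _ => hdiag i

section Pairing

variable {F V ι : Type*} [Field F] [AddCommGroup V] [Module F V] [Fintype ι] [DecidableEq ι]
  {v : ι → V} {φ : ι → Dual F V} {M : Matrix ι ι F}

theorem eq_zero_of_isUnit_pairing_of_forall_apply_sum_eq_zero (hM : IsUnit M)
    (hMvφ : ∀ i j, M i j = φ j (v i)) {c : ι → F} (hc : ∀ j, φ j (∑ i, c i • v i) = 0) :
    c = 0 := by
  have hcM : Matrix.vecMul c M = Matrix.vecMul 0 M := by
    ext j
    calc Matrix.vecMul c M j = φ j (∑ i, c i • v i) := by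
          simp only [Matrix.vecMul, dotProduct, hMvφ, map_sum, map_smul, smul_eq_mul]
      _ = Matrix.vecMul 0 M j := by rw [hc, Matrix.zero_vecMul, Pi.zero_apply]
  exact Matrix.vecMul_injective_iff_isUnit.mpr hM hcM

theorem linearIndependent_of_isUnit_pairing (hM : IsUnit M) (hMvφ : ∀ i j, M i j = φ j (v i)) :
    LinearIndependent F v :=
  Fintype.linearIndependent_iff.mpr fun c hc => congrFun
    (eq_zero_of_isUnit_pairing_of_forall_apply_sum_eq_zero hM hMvφ fun j => by
      rw [hc, map_zero])

theorem disjoint_span_dualCoannihilator_of_isUnit_pairing (hM : IsUnit M)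
    (hMvφ : ∀ i j, M i j = φ j (v i)) :
    Disjoint (span F (range v)) (span F (range φ)).dualCoannihilator := by
  rw [disjoint_def]
  intro _ hv hann
  obtain ⟨c, rfl⟩ := (mem_span_range_iff_exists_fun F).mp hv
  have hc : c = 0 := eq_zero_of_isUnit_pairing_of_forall_apply_sum_eq_zero hM hMvφ fun j =>
    (mem_dualCoannihilator _).mp hann _ (subset_span ⟨j, rfl⟩)
  simp [hc]

theorem isCompl_span_dualCoannihilator_of_isUnit_pairing [FiniteDimensional F V]
    (hM : IsUnit M) (hMvφ : ∀ i j, M i j = φ j (v i)) :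
    IsCompl (span F (range v)) (span F (range φ)).dualCoannihilator := by
  have hdisj := disjoint_span_dualCoannihilator_of_isUnit_pairing hM hMvφ
  refine ⟨hdisj, codisjoint_iff.mpr (eq_top_of_disjoint _ _ ?_ hdisj)⟩
  have hv := finrank_span_eq_card (linearIndependent_of_isUnit_pairing hM hMvφ)
  have hφ := finrank_range_le_card (R := F) φ
  have hann := Subspace.finrank_add_finrank_dualCoannihilator_eq (span F (range φ))
  rw [Set.finrank] at hφ
  omega

end Pairing

theorem stmt13_general {F V W : Type*} [Field F]
    [AddCommGroup V] [Module F V] [FiniteDimensional F V]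
    [AddCommGroup W] [Module F W]
    (A : V →ₗ[F] W) (B : W →ₗ[F] V) (m : ℕ)
    (x : V) (x' : Module.Dual F V)
    (h1 : x' (((B ∘ₗ A : Module.End F V) ^ m) x) ≠ 0)
    (h2 : ((B ∘ₗ A : Module.End F V) ^ (m + 1)) x = 0)
    (h3 : (((B ∘ₗ A : Module.End F V).dualMap :
        Module.End F (Module.Dual F V)) ^ (m + 1)) x' = 0)
    (G : Matrix (Fin (m + 1)) (Fin (m + 1)) F)
    (hG : ∀ i j : Fin (m + 1), G i j =
      ((((B ∘ₗ A : Module.End F V).dualMap :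
          Module.End F (Module.Dual F V)) ^ (m - (j : ℕ))) x')
        (((B ∘ₗ A : Module.End F V) ^ (i : ℕ)) x)) :
    (∀ i j : Fin (m + 1), (j : ℕ) < (i : ℕ) → G i j = 0) ∧
    (∀ i : Fin (m + 1), G i i ≠ 0) ∧
    IsUnit G ∧
    LinearIndependent F
      (fun i : Fin (m + 1) => ((B ∘ₗ A : Module.End F V) ^ (i : ℕ)) x) ∧
    IsCompl
      (Submodule.span F
        (Set.range fun i : Fin (m + 1) => ((B ∘ₗ A : Module.End F V) ^ (i : ℕ)) x))
      ((Submodule.span F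
        (Set.range fun j : Fin (m + 1) =>
          (((B ∘ₗ A : Module.End F V).dualMap :
            Module.End F (Module.Dual F V)) ^ (j : ℕ)) x')).dualCoannihilator) ∧
    ∀ v ∈ (Submodule.span F
        (Set.range fun j : Fin (m + 1) =>
          (((B ∘ₗ A : Module.End F V).dualMap :
            Module.End F (Module.Dual F V)) ^ (j : ℕ)) x')).dualCoannihilator,
      (B ∘ₗ A) v ∈ (Submodule.span F
        (Set.range fun j : Fin (m + 1) =>
          (((B ∘ₗ A : Module.End F V).dualMap :
            Module.End F (Module.Dual F V)) ^ (j : ℕ)) x')).dualCoannihilator := by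
  set T : Module.End F V := B ∘ₗ A
  have hG' (i j : Fin (m + 1)) : G i j = x' ((T ^ (m - j + i)) x) := by
    rw [hG, Module.End.dualMap_pow_apply, pow_add, Module.End.mul_apply]
  have hupper : G.IsUpperTriangular := fun i j hji => by
    rw [hG', Module.End.pow_map_zero_of_le (by simp only [id] at hji; omega) h2, map_zero]
  have hdiag (i : Fin (m + 1)) : G i i ≠ 0 := by
    rwa [hG', Nat.sub_add_cancel (Nat.le_of_lt_succ i.isLt)]
  have hunit := Matrix.isUnit_of_isUpperTriangular hupper hdiag
  have hrange : range (fun j : Fin (m + 1) => ((T.dualMap : Module.End F (Dual F V)) ^ (m - j)) x')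
      = range fun j : Fin (m + 1) => ((T.dualMap : Module.End F (Dual F V)) ^ (j : ℕ)) x' := by
    rw [← Fin.rev_surjective.range_comp]
    congr! with j
    simp [Fin.val_rev, Nat.sub_sub_self (Nat.le_of_lt_succ j.isLt)]
  refine ⟨fun i j => @hupper i j, hdiag, hunit, linearIndependent_of_isUnit_pairing hunit hG,
    ?_, fun v hv => ?_⟩
  · rw [← hrange]
    exact isCompl_span_dualCoannihilator_of_isUnit_pairing hunit hG
  · exact map_dualCoannihilator_le_of_map_dualMap_le (Module.End.map_span_range_pow_apply_le _ h3)
      (mem_map_of_mem hv)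

theorem stmt13 {F V W : Type*} [Field F]
    [AddCommGroup V] [Module F V] [FiniteDimensional F V]
    [AddCommGroup W] [Module F W]
    (A : V →ₗ[F] W) (B : W →ₗ[F] V) (m : ℕ)
    (hnil : IsNilpotent (B ∘ₗ A : Module.End F V))
    (x : V) (x' : Module.Dual F V)
    (h1 : x' (((B ∘ₗ A : Module.End F V) ^ m) x) ≠ 0)
    (h2 : ((B ∘ₗ A : Module.End F V) ^ (m + 1)) x = 0)
    (h3 : (((B ∘ₗ A : Module.End F V).dualMap :
        Module.End F (Module.Dual F V)) ^ (m + 1)) x' = 0)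
    (G : Matrix (Fin (m + 1)) (Fin (m + 1)) F)
    (hG : ∀ i j : Fin (m + 1), G i j =
      ((((B ∘ₗ A : Module.End F V).dualMap :
          Module.End F (Module.Dual F V)) ^ (m - (j : ℕ))) x')
        (((B ∘ₗ A : Module.End F V) ^ (i : ℕ)) x)) :
    (∀ i j : Fin (m + 1), (j : ℕ) < (i : ℕ) → G i j = 0) ∧
    (∀ i : Fin (m + 1), G i i ≠ 0) ∧
    IsUnit G ∧
    LinearIndependent F
      (fun i : Fin (m + 1) => ((B ∘ₗ A : Module.End F V) ^ (i : ℕ)) x) ∧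
    IsCompl
      (Submodule.span F
        (Set.range fun i : Fin (m + 1) => ((B ∘ₗ A : Module.End F V) ^ (i : ℕ)) x))
      ((Submodule.span F
        (Set.range fun j : Fin (m + 1) =>
          (((B ∘ₗ A : Module.End F V).dualMap :
            Module.End F (Module.Dual F V)) ^ (j : ℕ)) x')).dualCoannihilator) ∧
    ∀ v ∈ (Submodule.span F
        (Set.range fun j : Fin (m + 1) =>
          (((B ∘ₗ A : Module.End F V).dualMap :
            Module.End F (Module.Dual F V)) ^ (j : ℕ)) x')).dualCoannihilator,
      (B ∘ₗ A) v ∈ (Submodule.span F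
        (Set.range fun j : Fin (m + 1) =>
          (((B ∘ₗ A : Module.End F V).dualMap :
            Module.End F (Module.Dual F V)) ^ (j : ℕ)) x')).dualCoannihilator :=
  stmt13_general A B m x x' h1 h2 h3 G hG
end

section
/- Let A : V → W and B : W → V be linear maps of finite-dimensional vector spaces over a field F with AB and BA nilpotent. Then rank of any alternating word in A and B of length exceeding dim V + dim W is zero, and the maximal length l of a nonzero alternating word satisfies l ≤ dim V + dim W. -/
open Module Polynomial

lemma pow_finrank_eq_zero' {F V : Type*} [Field F] [AddCommGroup V] [Module F V]
    [FiniteDimensional F V] {φ : Module.End F V} (h : IsNilpotent φ) :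
    φ ^ Module.finrank F V = 0 := by
  have hc := h.charpoly_eq_X_pow_finrank
  have := φ.aeval_self_charpoly
  rwa [hc, map_pow, aeval_X] at this

lemma swap_pow {F V W : Type*} [Field F] [AddCommGroup V] [Module F V]
    [AddCommGroup W] [Module F W] (A : V →ₗ[F] W) (B : W →ₗ[F] V) (k : ℕ) :
    A ∘ₗ ((B ∘ₗ A : Module.End F V) ^ k) = ((A ∘ₗ B : Module.End F W) ^ k) ∘ₗ A := by
  induction k with
  | zero => ext v; simp
  | succ n ih =>
    ext v
    have h := LinearMap.congr_fun ih v
    simp only [LinearMap.comp_apply] at h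
    simp only [pow_succ', LinearMap.comp_apply, Module.End.mul_apply, h]

theorem stmt18 {F V W : Type*} [Field F]
    [AddCommGroup V] [Module F V] [FiniteDimensional F V]
    [AddCommGroup W] [Module F W] [FiniteDimensional F W]
    (A : V →ₗ[F] W) (B : W →ₗ[F] V)
    (hAB : IsNilpotent (A ∘ₗ B : Module.End F W))
    (hBA : IsNilpotent (B ∘ₗ A : Module.End F V)) :
    -- every alternating word of even length > dim V + dim W is zero
    (∀ k : ℕ, Module.finrank F V + Module.finrank F W < 2 * k →
      ((B ∘ₗ A : Module.End F V) ^ k = 0 ∧ (A ∘ₗ B : Module.End F W) ^ k = 0)) ∧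
    -- every alternating word of odd length > dim V + dim W is zero
    (∀ k : ℕ, Module.finrank F V + Module.finrank F W < 2 * k + 1 →
      (A ∘ₗ ((B ∘ₗ A : Module.End F V) ^ k) = 0 ∧
       B ∘ₗ ((A ∘ₗ B : Module.End F W) ^ k) = 0)) := by
  set n := Module.finrank F V with hn'
  set m := Module.finrank F W with hm'
  have hV : (B ∘ₗ A : Module.End F V) ^ n = 0 := pow_finrank_eq_zero' hBA
  have hW : (A ∘ₗ B : Module.End F W) ^ m = 0 := pow_finrank_eq_zero' hAB
  have hVk : ∀ k, n ≤ k → (B ∘ₗ A : Module.End F V) ^ k = 0 := fun k hk => by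
    obtain ⟨j, rfl⟩ := Nat.exists_eq_add_of_le hk
    rw [pow_add, hV, zero_mul]
  have hWk : ∀ k, m ≤ k → (A ∘ₗ B : Module.End F W) ^ k = 0 := fun k hk => by
    obtain ⟨j, rfl⟩ := Nat.exists_eq_add_of_le hk
    rw [pow_add, hW, zero_mul]
  constructor
  · -- even case
    intro k hk
    constructor
    · rcases le_or_gt n k with h | h
      · exact hVk k h
      · obtain ⟨j, rfl⟩ : ∃ j, k = j + 1 := ⟨k - 1, by omega⟩
        have hm : m ≤ j := by omega
        rw [pow_succ]
        show ((B ∘ₗ A : Module.End F V) ^ j) ∘ₗ (B ∘ₗ A) = 0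
        rw [← LinearMap.comp_assoc, ← swap_pow B A j, hWk j hm,
          LinearMap.comp_zero, LinearMap.zero_comp]
    · rcases le_or_gt m k with h | h
      · exact hWk k h
      · obtain ⟨j, rfl⟩ : ∃ j, k = j + 1 := ⟨k - 1, by omega⟩
        have hm : n ≤ j := by omega
        rw [pow_succ]
        show ((A ∘ₗ B : Module.End F W) ^ j) ∘ₗ (A ∘ₗ B) = 0
        rw [← LinearMap.comp_assoc, ← swap_pow A B j, hVk j hm,
          LinearMap.comp_zero, LinearMap.zero_comp]
  · -- odd case
    intro k hk
    constructor
    · rcases le_or_gt n k with h | h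
      · rw [hVk k h, LinearMap.comp_zero]
      · have hm : m ≤ k := by omega
        rw [swap_pow, hWk k hm, LinearMap.zero_comp]
    · rcases le_or_gt m k with h | h
      · rw [hWk k h, LinearMap.comp_zero]
      · have hnk : n ≤ k := by omega
        rw [swap_pow, hVk k hnk, LinearMap.zero_comp]
end

section
/- Let A : V → W, B : W → V be linear maps over a field F with AB, BA nilpotent. Suppose every alternating word in A and B of length > l is zero, and C : V → W is a nonzero alternating word of odd length l ending in A. Then there exists x ∈ V such that the subspaces V₃ = span{(BA)^i x : 0 ≤ i ≤ (l−1)/2} and W₃ = span{(AB)^i A x : 0 ≤ i ≤ (l−1)/2} both have dimension (l+1)/2, A restricts to an isomorphism V₃ → W₃, B maps W₃ into V₃, and with respect to the bases ((BA)^i x) and ((AB)^i Ax), A|_{V₃} is the identity matrix I_{(l+1)/2} and B|_{W₃} is the nilpotent Jordan block J_{(l+1)/2}. -/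
theorem stmt19 {F V W : Type*} [Field F]
    [AddCommGroup V] [Module F V] [FiniteDimensional F V]
    [AddCommGroup W] [Module F W] [FiniteDimensional F W]
    (A : V →ₗ[F] W) (B : W →ₗ[F] V)
    (hAB : IsNilpotent (A ∘ₗ B : Module.End F W))
    (hBA : IsNilpotent (B ∘ₗ A : Module.End F V))
    (l m : ℕ) (hl : l = 2 * m + 1)
    -- the alternating word A(BA)^m of odd length l ending in A is nonzero
    (hC : A ∘ₗ ((B ∘ₗ A : Module.End F V) ^ m) ≠ 0)
    -- every alternating word of length > l is zero
    (hmax1 : (B ∘ₗ A : Module.End F V) ^ (m + 1) = 0)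
    (hmax2 : (A ∘ₗ B : Module.End F W) ^ (m + 1) = 0) :
    ∃ x : V,
      LinearIndependent F
        (fun i : Fin (m + 1) => ((B ∘ₗ A : Module.End F V) ^ (i : ℕ)) x) ∧
      LinearIndependent F
        (fun i : Fin (m + 1) => ((A ∘ₗ B : Module.End F W) ^ (i : ℕ)) (A x)) ∧
      Module.finrank F (Submodule.span F
        (Set.range fun i : Fin (m + 1) => ((B ∘ₗ A : Module.End F V) ^ (i : ℕ)) x))
        = m + 1 ∧
      Module.finrank F (Submodule.span F
        (Set.range fun i : Fin (m + 1) => ((A ∘ₗ B : Module.End F W) ^ (i : ℕ)) (A x)))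
        = m + 1 ∧
      -- A restricts to an isomorphism V₃ → W₃
      Submodule.map A (Submodule.span F
          (Set.range fun i : Fin (m + 1) => ((B ∘ₗ A : Module.End F V) ^ (i : ℕ)) x))
        = Submodule.span F
          (Set.range fun i : Fin (m + 1) => ((A ∘ₗ B : Module.End F W) ^ (i : ℕ)) (A x)) ∧
      (∀ v ∈ Submodule.span F
          (Set.range fun i : Fin (m + 1) => ((B ∘ₗ A : Module.End F V) ^ (i : ℕ)) x),
        A v = 0 → v = 0) ∧
      -- B maps W₃ into V₃
      Submodule.map B (Submodule.span F
          (Set.range fun i : Fin (m + 1) => ((A ∘ₗ B : Module.End F W) ^ (i : ℕ)) (A x)))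
        ≤ Submodule.span F
          (Set.range fun i : Fin (m + 1) => ((B ∘ₗ A : Module.End F V) ^ (i : ℕ)) x) ∧
      -- with respect to the indicated bases, A|_{V₃} is the identity matrix
      (∀ i : Fin (m + 1),
        A (((B ∘ₗ A : Module.End F V) ^ (i : ℕ)) x)
          = ((A ∘ₗ B : Module.End F W) ^ (i : ℕ)) (A x)) ∧
      -- and B|_{W₃} is the nilpotent Jordan block J_{m+1}
      (∀ i : Fin (m + 1),
        B (((A ∘ₗ B : Module.End F W) ^ (i : ℕ)) (A x))
          = ((B ∘ₗ A : Module.End F V) ^ ((i : ℕ) + 1)) x) ∧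
      ((B ∘ₗ A : Module.End F V) ^ (m + 1)) x = 0 := by
  classical
  set φ : Module.End F V := B ∘ₗ A with hφ
  set ψ : Module.End F W := A ∘ₗ B with hψ
  -- choose x with A (φ^m x) ≠ 0
  obtain ⟨x, hx⟩ : ∃ x : V, A ((φ ^ m) x) ≠ 0 := by
    by_contra h
    push_neg at h
    exact hC (by ext v; simpa using h v)
  -- commuting lemmas
  have commA : ∀ (k : ℕ) (v : V), (ψ ^ k) (A v) = A ((φ ^ k) v) := by
    intro k
    induction k with
    | zero => intro v; simp
    | succ k ih =>
      intro v
      have h1 : (ψ ^ (k + 1)) (A v) = (ψ ^ k) (ψ (A v)) := by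
        rw [pow_succ, Module.End.mul_apply]
      have h2 : ψ (A v) = A (φ v) := by simp [hψ, hφ]
      rw [h1, h2, ih (φ v), ← Module.End.mul_apply, ← pow_succ]
  have commB : ∀ (k : ℕ) (w : W), (φ ^ k) (B w) = B ((ψ ^ k) w) := by
    intro k
    induction k with
    | zero => intro w; simp
    | succ k ih =>
      intro w
      have h1 : (φ ^ (k + 1)) (B w) = (φ ^ k) (φ (B w)) := by
        rw [pow_succ, Module.End.mul_apply]
      have h2 : φ (B w) = B (ψ w) := by simp [hψ, hφ]
      rw [h1, h2, ih (ψ w), ← Module.End.mul_apply, ← pow_succ]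
  have nilp : ∀ k : ℕ, m + 1 ≤ k → (φ ^ k : Module.End F V) = 0 := by
    intro k hk
    obtain ⟨d, rfl⟩ := Nat.exists_eq_add_of_le hk
    rw [pow_add, hmax1, zero_mul]
  -- core coordinate lemma
  have core : ∀ g : Fin (m + 1) → F,
      (∑ i : Fin (m + 1), g i • A ((φ ^ (i : ℕ)) x)) = 0 → ∀ i, g i = 0 := by
    intro g hsum
    have main : ∀ n : ℕ, ∀ j : Fin (m + 1), (j : ℕ) = n → g j = 0 := by
      intro n
      induction n using Nat.strong_induction_on with
      | _ n ih =>
        intro j hj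
        have hjm : n ≤ m := by have := j.isLt; omega
        have h2 : ∑ i : Fin (m + 1), g i • A ((φ ^ ((m - n) + (i : ℕ))) x) = 0 := by
          have h := congrArg (fun y => (ψ ^ (m - n)) y) hsum
          simp only [map_sum, map_smul, map_zero] at h
          simp only [commA, ← Module.End.mul_apply, ← pow_add] at h
          exact h
        rw [Finset.sum_eq_single j] at h2
        · have hmn : (m - n) + (j : ℕ) = m := by omega
          rw [hmn] at h2
          rcases smul_eq_zero.mp h2 with h | h
          · exact h
          · exact absurd h hx
        · intro b _ hb
          by_cases hbn : (b : ℕ) < n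
          · rw [ih (b : ℕ) hbn b rfl, zero_smul]
          · have hne : (b : ℕ) ≠ n := fun h => hb (Fin.ext (h.trans hj.symm))
            have hk : m + 1 ≤ (m - n) + (b : ℕ) := by omega
            rw [nilp _ hk]
            simp
        · intro h; exact absurd (Finset.mem_univ j) h
    intro i; exact main (i : ℕ) i rfl
  refine ⟨x, ?_, ?_, ?_, ?_, ?_, ?_, ?_, ?_, ?_, ?_⟩
  · -- V independence
    rw [Fintype.linearIndependent_iff]
    intro g hg
    apply core g
    have := congrArg A hg
    simpa [map_sum, map_smul] using this
  · -- W independence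
    rw [Fintype.linearIndependent_iff]
    intro g hg
    apply core g
    simp only [commA] at hg
    exact hg
  · -- finrank V₃
    have li : LinearIndependent F (fun i : Fin (m + 1) => ((φ ^ (i : ℕ))) x) := by
      rw [Fintype.linearIndependent_iff]
      intro g hg
      apply core g
      have := congrArg A hg
      simpa [map_sum, map_smul] using this
    rw [finrank_span_eq_card li, Fintype.card_fin]
  · -- finrank W₃
    have li : LinearIndependent F (fun i : Fin (m + 1) => ((ψ ^ (i : ℕ))) (A x)) := by
      rw [Fintype.linearIndependent_iff]
      intro g hg
      apply core g
      simp only [commA] at hg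
      exact hg
    rw [finrank_span_eq_card li, Fintype.card_fin]
  · -- map equality
    rw [Submodule.map_span, ← Set.range_comp]
    exact congrArg (Submodule.span F)
      (congrArg Set.range (funext fun i => (commA (i : ℕ) x).symm))
  · -- injectivity on V₃
    intro p hp hAp
    rw [Submodule.mem_span_range_iff_exists_fun] at hp
    obtain ⟨c, hc⟩ := hp
    have hsum : ∑ i : Fin (m + 1), c i • A ((φ ^ (i : ℕ)) x) = 0 := by
      have := congrArg A hc
      simp only [map_sum, map_smul] at this
      rw [this, hAp]
    have hc0 := core c hsum
    rw [← hc]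
    simp [hc0]
  · -- B maps W₃ into V₃
    rw [Submodule.map_span, Submodule.span_le]
    rintro _ ⟨_, ⟨i, rfl⟩, rfl⟩
    have hBw : B ((ψ ^ (i : ℕ)) (A x)) = (φ ^ ((i : ℕ) + 1)) x := by
      rw [← commB, pow_succ, Module.End.mul_apply]
      congr 1
    by_cases hi : (i : ℕ) < m
    · rw [hBw]
      exact Submodule.subset_span ⟨⟨(i : ℕ) + 1, by omega⟩, rfl⟩
    · have him : (i : ℕ) = m := by have := i.isLt; omega
      rw [hBw, him, hmax1]
      simp
  · -- identity matrix
    intro i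
    exact (commA (i : ℕ) x).symm
  · -- Jordan block
    intro i
    rw [← commB, pow_succ, Module.End.mul_apply]
    congr 1
  · rw [hmax1]; simp
end
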